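/- arXiv:0812.4279 — 2 statements merged into one kernel-verified Lean document; each statement's English description precedes it below -/
import Mathlib

section
/- In a continuous game with finitely many players, a probability measure π is an ε-correlated equilibrium if and only if for every player i, every positive integer k, all strategies t_i^1,…,t_i^k ∈ C_i, and all Borel measurable functions f_i^1,…,f_i^k : C_i → [0,1] satisfying ∑_{j=1}^k f_i^j(s_i) ≤ 1 for all s_i ∈ C_i, the inequality ∑_{j=1}^k ∫ f_i^j(s_i)[u_i(t_i^j, s_{−i}) − u_i(s)] dπ(s) ≤ ε holds. -/
/-!
Both directions compare a measurable deviation `ζ` with finitely many fractional deviations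
toward fixed pure strategies `t j`. Given fractions `f j`, draw `r` uniformly from `[0, 1]` and
let `ζ_r` play `t j` at `x` when `r` falls in the `j`-th of the consecutive intervals of lengths
`f j x`; averaging the equilibrium inequality for `ζ_r` over `r` (Fubini) gives the fractional
inequality. Conversely, by compactness `x ↦ u (update s i x)` is uniformly approximated within
`δ` by its values on a finite net `t j`, so any `ζ` is within `δ` of `t ∘ q ∘ ζ` for a measurable
index map `q`, which is a fractional deviation with `0/1` weights.
-/

open MeasureTheory Set Function
open scoped Topology

theorem ContinuousMap.isClosed_setOf_measurable {Y : Type*} [TopologicalSpace Y] [CompactSpace Y]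
    [MeasurableSpace Y] : IsClosed {g : C(Y, ℝ) | Measurable g} := by
  rw [← isSeqClosed_iff_isClosed]
  intro g g₀ hg hlim
  refine measurable_of_tendsto_metrizable hg ?_
  rw [tendsto_pi_nhds]
  exact fun y => ((continuous_eval_const y).tendsto g₀).comp hlim

/-- The product σ-algebra can be strictly smaller than the Borel σ-algebra of the product, so this
needs Stone–Weierstrass: the measurable continuous functions form a closed subalgebra that separates
points. -/
theorem Continuous.measurable_of_compactSpace_pi {ι : Type*} {X : ι → Type*}
    [∀ i, TopologicalSpace (X i)] [∀ i, CompactSpace (X i)] [∀ i, T2Space (X i)]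
    [∀ i, MeasurableSpace (X i)] [∀ i, OpensMeasurableSpace (X i)]
    {f : (∀ i, X i) → ℝ} (hf : Continuous f) : Measurable f := by
  let A : Subalgebra ℝ C(∀ i, X i, ℝ) :=
    { carrier := {g | Measurable g}
      mul_mem' := Measurable.mul
      add_mem' := Measurable.add
      algebraMap_mem' := fun _ => measurable_const }
  have hsep : A.SeparatesPoints := by
    intro x y hxy
    obtain ⟨i, hi⟩ := Function.ne_iff.1 hxy
    obtain ⟨g, hgx, hgy, -⟩ := exists_continuous_zero_one_of_isClosed isClosed_singleton
      isClosed_singleton (disjoint_singleton.2 hi)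
    exact ⟨_, ⟨g.comp ⟨_, continuous_apply i⟩,
      g.continuous.measurable.comp (measurable_pi_apply i), rfl⟩, by simp [hgx rfl, hgy rfl]⟩
  have hdense := ContinuousMap.subalgebra_topologicalClosure_eq_top_of_separatesPoints A hsep
  exact Subalgebra.topologicalClosure_minimal le_rfl ContinuousMap.isClosed_setOf_measurable
    (hdense ▸ Algebra.mem_top : (⟨f, hf⟩ : C(∀ i, X i, ℝ)) ∈ A.topologicalClosure)

theorem measurable_fin_find {α : Type*} [MeasurableSpace α] {n : ℕ} {p : α → Fin n → Prop}
    [∀ x, DecidablePred (p x)] (hp : ∀ x, ∃ j, p x j) (hm : ∀ j, MeasurableSet {x | p x j}) :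
    Measurable fun x => Fin.find (p x) (hp x) := by
  refine measurable_to_countable' fun j => ?_
  have hpre : (fun x => Fin.find (p x) (hp x)) ⁻¹' {j} = {x | p x j} ∩ ⋂ l < j, {x | p x l}ᶜ := by
    ext x; simp [Fin.find_eq_iff]
  rw [hpre]
  exact (hm j).inter (.iInter fun l => .iInter fun _ => (hm l).compl)

theorem exists_measurable_fin_mem_of_mem_nhds {X : Type*} [TopologicalSpace X] [CompactSpace X]
    [MeasurableSpace X] (U : X → Set X) (hU : ∀ x, U x ∈ 𝓝 x)
    (hUm : ∀ x, MeasurableSet (U x)) :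
    ∃ (k : ℕ) (t : Fin k → X) (q : X → Fin k), Measurable q ∧ ∀ x, x ∈ U (t (q x)) := by
  classical
  obtain ⟨T, hT⟩ := CompactSpace.elim_nhds_subcover U hU
  let t : Fin T.card → X := fun j => T.equivFin.symm j
  have hcover : ∀ x, ∃ j, x ∈ U (t j) := fun x => by
    obtain ⟨y, hy, hxy⟩ := mem_iUnion₂.1 (hT.symm ▸ mem_univ x : x ∈ ⋃ y ∈ T, U y)
    exact ⟨T.equivFin ⟨y, hy⟩, by simpa [t] using hxy⟩
  exact ⟨_, t, fun x => Fin.find _ (hcover x), measurable_fin_find hcover fun j => hUm _,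
    fun x => Fin.find_spec (hcover x)⟩

theorem exists_measurable_eqOn_of_pairwise_disjoint {α β ι : Type*} [MeasurableSpace α]
    [MeasurableSpace β] [Countable ι] {A : ι → Set α} (hA : ∀ i, MeasurableSet (A i))
    (hd : Pairwise (Disjoint on A)) {g : ι → α → β} (hg : ∀ i, Measurable (g i)) {g₀ : α → β}
    (hg₀ : Measurable g₀) :
    ∃ F : α → β, Measurable F ∧ (∀ i, EqOn F (g i) (A i)) ∧ EqOn F g₀ (⋃ i, A i)ᶜ := by
  have hagree : Pairwise fun a b : Option ι =>
      EqOn (a.elim g₀ g) (b.elim g₀ g) (a.elim (⋃ i, A i)ᶜ A ∩ b.elim (⋃ i, A i)ᶜ A) := by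
    rintro (_ | i) (_ | j) hij x ⟨hx, hy⟩
    · exact absurd rfl hij
    · exact absurd (mem_iUnion_of_mem j hy) hx
    · exact absurd (mem_iUnion_of_mem i hx) hy
    · exact ((hd fun h => hij (congrArg some h)).ne_of_mem hx hy rfl).elim
  obtain ⟨F, hF, hFeq⟩ := exists_measurable_piecewise (fun o : Option ι => o.elim (⋃ i, A i)ᶜ A)
    (by rintro (_ | i); exacts [(MeasurableSet.iUnion hA).compl, hA i])
    (fun o => o.elim g₀ g) (by rintro (_ | i); exacts [hg₀, hg i]) hagree
  exact ⟨F, hF, fun i => hFeq (some i), hFeq none⟩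

section CumulativeIco

variable {k : ℕ}

def cumulativeIco (a : Fin k → ℝ) (j : Fin k) : Set ℝ :=
  Ico (∑ l ∈ Finset.Iio j, a l) (∑ l ∈ Finset.Iio j, a l + a j)

theorem measurableSet_cumulativeIco (a : Fin k → ℝ) (j : Fin k) :
    MeasurableSet (cumulativeIco a j) :=
  measurableSet_Ico

variable {a : Fin k → ℝ}

theorem sum_Iio_add_le_sum_of_subset (ha : ∀ j, 0 ≤ a j) {j : Fin k} {s : Finset (Fin k)}
    (hs : Finset.Iic j ⊆ s) : ∑ l ∈ Finset.Iio j, a l + a j ≤ ∑ l ∈ s, a l := by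
  rw [Finset.sum_Iio_add_eq_sum_Iic]
  exact Finset.sum_le_sum_of_subset_of_nonneg hs fun l _ _ => ha l

theorem pairwise_disjoint_cumulativeIco (ha : ∀ j, 0 ≤ a j) :
    Pairwise (Disjoint on cumulativeIco a) := by
  have hle : ∀ {j j'}, j < j' → ∑ l ∈ Finset.Iio j, a l + a j ≤ ∑ l ∈ Finset.Iio j', a l :=
    fun h => sum_Iio_add_le_sum_of_subset ha fun _ hl =>
      Finset.mem_Iio.2 ((Finset.mem_Iic.1 hl).trans_lt h)
  intro j j' hne
  rcases hne.lt_or_gt with h | h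
  · exact disjoint_left.2 fun r hr hr' => not_le.2 (hr'.1.trans_lt hr.2) (hle h)
  · exact disjoint_left.2 fun r hr hr' => not_le.2 (hr.1.trans_lt hr'.2) (hle h)

theorem cumulativeIco_subset_Icc (ha : ∀ j, 0 ≤ a j) (j : Fin k) :
    cumulativeIco a j ⊆ Icc 0 (∑ l, a l) := fun _ hr =>
  ⟨(Finset.sum_nonneg fun l _ => ha l).trans hr.1,
    hr.2.le.trans (sum_Iio_add_le_sum_of_subset ha (Finset.subset_univ _))⟩

theorem measureReal_restrict_Icc_cumulativeIco (ha : ∀ j, 0 ≤ a j) (hsum : ∑ l, a l ≤ 1)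
    (j : Fin k) : (volume.restrict (Icc (0 : ℝ) 1)).real (cumulativeIco a j) = a j := by
  rw [measureReal_restrict_apply (measurableSet_cumulativeIco a j),
    inter_eq_left.2 ((cumulativeIco_subset_Icc ha j).trans (Icc_subset_Icc_right hsum)),
    cumulativeIco, Real.volume_real_Ico]
  simp [ha j]

end CumulativeIco

section Randomization

variable {X : Type*} {k : ℕ}

def randomizationSet (f : Fin k → X → ℝ) (j : Fin k) : Set (ℝ × X) :=
  {q | q.1 ∈ cumulativeIco (fun l => f l q.2) j}

variable {f : Fin k → X → ℝ}

theorem measurableSet_randomizationSet [MeasurableSpace X] (hf : ∀ j, Measurable (f j))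
    (j : Fin k) : MeasurableSet (randomizationSet f j) := by
  have hF : Measurable fun q : ℝ × X => ∑ l ∈ Finset.Iio j, f l q.2 :=
    Finset.measurable_sum _ fun l _ => (hf l).comp measurable_snd
  exact (measurableSet_le hF measurable_fst).inter
    (measurableSet_lt measurable_fst (hF.add ((hf j).comp measurable_snd)))

theorem pairwise_disjoint_randomizationSet (hf0 : ∀ j x, 0 ≤ f j x) :
    Pairwise (Disjoint on randomizationSet f) := fun _ _ h =>
  disjoint_left.2 fun q hq hq' =>
    (pairwise_disjoint_cumulativeIco (hf0 · q.2) h).ne_of_mem hq hq' rfl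

end Randomization

section Deviation

variable {X Ω : Type*} [MeasurableSpace X] [MeasurableSpace Ω] {π : Measure Ω}
  [IsProbabilityMeasure π] {p : Ω → X} {G : X → Ω → ℝ} {M ε : ℝ}

theorem integrable_apply_comp (hG : Measurable (uncurry G)) (hGM : ∀ x s, |G x s| ≤ M)
    {φ : Ω → X} (hφ : Measurable φ) : Integrable (fun s => G (φ s) s) π :=
  .of_bound (hG.comp (hφ.prodMk measurable_id)).aestronglyMeasurable M
    (ae_of_all _ fun s => hGM _ s)

theorem integrable_mul_apply (hG : Measurable (uncurry G)) (hGM : ∀ x s, |G x s| ≤ M)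
    (hp : Measurable p) {g : X → ℝ} (hg : Measurable g) (hg1 : ∀ x, |g x| ≤ 1) (x : X) :
    Integrable (fun s => g (p s) * G x s) π :=
  (integrable_apply_comp hG hGM measurable_const).bdd_mul (hg.comp hp).aestronglyMeasurable
    (ae_of_all _ fun s => hg1 (p s))

theorem sum_integral_mul_le_of_forall_measurable (hp : Measurable p) (hG : Measurable (uncurry G))
    (hGM : ∀ x s, |G x s| ≤ M) (hG0 : ∀ s, G (p s) s = 0)
    (H : ∀ ζ : X → X, Measurable ζ → ∫ s, G (ζ (p s)) s ∂π ≤ ε) {k : ℕ} (t : Fin k → X)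
    {f : Fin k → X → ℝ} (hf : ∀ j, Measurable (f j)) (hf0 : ∀ j x, 0 ≤ f j x)
    (hf1 : ∀ x, ∑ j, f j x ≤ 1) :
    ∑ j, ∫ s, f j (p s) * G (t j) s ∂π ≤ ε := by
  classical
  set ν : Measure ℝ := volume.restrict (Icc 0 1)
  have : IsProbabilityMeasure ν := ⟨by simp [ν]⟩
  obtain ⟨Z, hZm, hZS, hZ0⟩ := exists_measurable_eqOn_of_pairwise_disjoint
    (measurableSet_randomizationSet hf) (pairwise_disjoint_randomizationSet hf0)
    (fun j => measurable_const (a := t j)) measurable_snd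
  let D : ℝ → Ω → ℝ := fun r s => G (Z (r, p s)) s
  have hDm : Measurable (uncurry D) :=
    hG.comp ((hZm.comp (measurable_fst.prodMk (hp.comp measurable_snd))).prodMk measurable_snd)
  have hD : Integrable (uncurry D) (ν.prod π) :=
    .of_bound hDm.aestronglyMeasurable M (ae_of_all _ fun q => hGM _ _)
  have hD_eq : ∀ r s, D r s =
      ∑ j, (cumulativeIco (fun l => f l (p s)) j).indicator (fun _ => G (t j) s) r := by
    intro r s
    by_cases hr : ∃ j, r ∈ cumulativeIco (fun l => f l (p s)) j
    · obtain ⟨j, hj⟩ := hr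
      rw [Finset.sum_eq_single j, indicator_of_mem hj]
      · exact congrArg (G · s) (hZS j (show (r, p s) ∈ randomizationSet f j from hj))
      · exact fun l _ hl => indicator_of_notMem (fun hl' =>
          (pairwise_disjoint_cumulativeIco (hf0 · (p s)) hl).ne_of_mem hl' hj rfl) _
      · simp
    · push Not at hr
      rw [Finset.sum_eq_zero fun j _ => indicator_of_notMem (hr j) _]
      have hout : (r, p s) ∈ (⋃ j, randomizationSet f j)ᶜ := by
        simpa [randomizationSet] using hr
      simp only [D, hZ0 hout, hG0]
  have hD_int : ∀ s, ∫ r, D r s ∂ν = ∑ j, f j (p s) * G (t j) s := by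
    intro s
    simp_rw [hD_eq]
    rw [integral_finsetSum _ fun j _ =>
      (integrable_const _).indicator (measurableSet_cumulativeIco _ j)]
    refine Finset.sum_congr rfl fun j _ => ?_
    rw [integral_indicator_const _ (measurableSet_cumulativeIco _ _),
      measureReal_restrict_Icc_cumulativeIco (hf0 · (p s)) (hf1 (p s)), smul_eq_mul]
  have hf_abs : ∀ j x, |f j x| ≤ 1 := fun j x => by
    rw [abs_of_nonneg (hf0 j x)]
    exact (Finset.single_le_sum (fun l _ => hf0 l x) (Finset.mem_univ j)).trans (hf1 x)
  calc ∑ j, ∫ s, f j (p s) * G (t j) s ∂π = ∫ s, ∫ r, D r s ∂ν ∂π := by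
        rw [← integral_finsetSum _ fun j _ =>
          integrable_mul_apply hG hGM hp (hf j) (hf_abs j) (t j)]
        simp_rw [hD_int]
    _ = ∫ r, ∫ s, D r s ∂π ∂ν := (integral_integral_swap hD).symm
    _ ≤ ∫ _, ε ∂ν := integral_mono hD.integral_prod_left (integrable_const ε)
        fun r => H _ (hZm.comp measurable_prodMk_left)
    _ = ε := by simp

end Deviation

theorem ContinuousMap.exists_abs_apply_apply_le {X Ω : Type*} [TopologicalSpace X]
    [CompactSpace X] [TopologicalSpace Ω] [CompactSpace Ω] (Φ : C(X, C(Ω, ℝ))) :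
    ∃ M, ∀ x s, |Φ x s| ≤ M := by
  obtain ⟨M, hM⟩ := isCompact_univ.exists_bound_of_continuousOn Φ.continuous.continuousOn
  exact ⟨M, fun x s => (ContinuousMap.norm_coe_le_norm (Φ x) s).trans (hM x trivial)⟩

section ContinuousDeviation

variable {X Ω : Type*} [TopologicalSpace X] [CompactSpace X] [MeasurableSpace X]
  [TopologicalSpace Ω] [CompactSpace Ω] [MeasurableSpace Ω] {π : Measure Ω}
  [IsProbabilityMeasure π] {p : Ω → X} {Φ : C(X, C(Ω, ℝ))} {ε : ℝ}

theorem integral_le_of_forall_sum_integral_mul_le [OpensMeasurableSpace X] (hp : Measurable p)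
    (hΦ : Measurable (uncurry fun x => ⇑(Φ x)))
    (H : ∀ k : ℕ, 0 < k → ∀ t : Fin k → X, ∀ f : Fin k → X → ℝ, (∀ j, Measurable (f j)) →
      (∀ j x, f j x ∈ Icc (0 : ℝ) 1) → (∀ x, ∑ j, f j x ≤ 1) →
      ∑ j, ∫ s, f j (p s) * Φ (t j) s ∂π ≤ ε)
    {ζ : X → X} (hζ : Measurable ζ) : ∫ s, Φ (ζ (p s)) s ∂π ≤ ε := by
  classical
  obtain ⟨M, hM⟩ := Φ.exists_abs_apply_apply_le
  refine le_of_forall_pos_le_add fun δ hδ => ?_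
  obtain ⟨k, t, q, hq, hqt⟩ := exists_measurable_fin_mem_of_mem_nhds
    (fun x => Φ ⁻¹' Metric.ball (Φ x) δ)
    (fun x => Φ.continuous.continuousAt.preimage_mem_nhds (Metric.ball_mem_nhds _ hδ))
    (fun x => (Metric.isOpen_ball.preimage Φ.continuous).measurableSet)
  let f : Fin k → X → ℝ := fun j x => if q (ζ x) = j then 1 else 0
  have hf : ∀ j, Measurable (f j) := fun j =>
    (measurable_of_countable fun l => if l = j then (1 : ℝ) else 0).comp (hq.comp hζ)
  have hsum : ∀ s, ∑ j, f j (p s) * Φ (t j) s = Φ (t (q (ζ (p s)))) s := fun s => by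
    simp [f, ite_mul]
  have hk : 0 < k := (q (p (nonempty_of_isProbabilityMeasure π).some)).pos
  have hf01 : ∀ j x, f j x ∈ Icc 0 1 := fun j x => by
    by_cases h : q (ζ x) = j <;> simp [f, h]
  have hfrac := H k hk t f hf hf01 (fun x => by simp [f])
  have hclose : ∀ s, Φ (ζ (p s)) s ≤ Φ (t (q (ζ (p s)))) s + δ := fun s => by
    have := (ContinuousMap.dist_apply_le_dist s).trans_lt (hqt (ζ (p s)))
    rw [Real.dist_eq] at this
    linarith [le_abs_self (Φ (ζ (p s)) s - Φ (t (q (ζ (p s)))) s)]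
  have hint : ∀ φ : Ω → X, Measurable φ → Integrable (fun s => Φ (φ s) s) π :=
    fun φ hφ => integrable_apply_comp hΦ hM hφ
  calc ∫ s, Φ (ζ (p s)) s ∂π ≤ ∫ s, (Φ (t (q (ζ (p s)))) s + δ) ∂π :=
        integral_mono (hint _ (hζ.comp hp))
          ((hint _ ((measurable_of_countable t).comp (hq.comp (hζ.comp hp)))).add
            (integrable_const δ)) hclose
    _ = ∫ s, (∑ j, f j (p s) * Φ (t j) s + δ) ∂π := by simp only [hsum]
    _ = ∑ j, ∫ s, f j (p s) * Φ (t j) s ∂π + δ := by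
        have hterm : ∀ j, Integrable (fun s => f j (p s) * Φ (t j) s) π := fun j =>
          integrable_mul_apply hΦ hM hp (hf j)
            (fun x => abs_le.2 ⟨by linarith [(hf01 j x).1], (hf01 j x).2⟩) (t j)
        rw [integral_add (integrable_finsetSum _ fun j _ => hterm j) (integrable_const δ),
          integral_finsetSum _ fun j _ => hterm j]
        simp
    _ ≤ ε + δ := by linarith

theorem forall_integral_le_iff_forall_sum_integral_mul_le [OpensMeasurableSpace X]
    (hp : Measurable p) (hΦ : Measurable (uncurry fun x => ⇑(Φ x))) (hΦ0 : ∀ s, Φ (p s) s = 0) :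
    (∀ ζ : X → X, Measurable ζ → ∫ s, Φ (ζ (p s)) s ∂π ≤ ε) ↔
      ∀ k : ℕ, 0 < k → ∀ t : Fin k → X, ∀ f : Fin k → X → ℝ, (∀ j, Measurable (f j)) →
        (∀ j x, f j x ∈ Icc (0 : ℝ) 1) → (∀ x, ∑ j, f j x ≤ 1) →
        ∑ j, ∫ s, f j (p s) * Φ (t j) s ∂π ≤ ε := by
  obtain ⟨M, hM⟩ := Φ.exists_abs_apply_apply_le
  exact ⟨fun H _ _ t _ hf hf01 hf1 => sum_integral_mul_le_of_forall_measurable hp hΦ hM hΦ0 H t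
    hf (fun j x => (hf01 j x).1) hf1,
    fun H _ hζ => integral_le_of_forall_sum_integral_mul_le hp hΦ H hζ⟩

end ContinuousDeviation

theorem stmt_7_general (n : ℕ) (C : Fin n → Type*)
    [∀ i, TopologicalSpace (C i)] [∀ i, CompactSpace (C i)] [∀ i, T2Space (C i)]
    [∀ i, MeasurableSpace (C i)] [∀ i, BorelSpace (C i)]
    (u : Fin n → (∀ i, C i) → ℝ) (hu : ∀ i, Continuous (u i))
    (π : Measure (∀ i, C i)) [IsProbabilityMeasure π]
    (ε : ℝ) :
    (∀ i, ∀ ζ : C i → C i, Measurable ζ →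
      ∫ s, (u i (Function.update s i (ζ (s i))) - u i s) ∂π ≤ ε) ↔
    (∀ i, ∀ k : ℕ, 0 < k → ∀ t : Fin k → C i, ∀ f : Fin k → C i → ℝ,
      (∀ j, Measurable (f j)) →
      (∀ j x, f j x ∈ Set.Icc (0 : ℝ) 1) →
      (∀ x, ∑ j, f j x ≤ 1) →
      ∑ j, ∫ s, f j (s i) * (u i (Function.update s i (t j)) - u i s) ∂π ≤ ε) := by
  refine forall_congr' fun i => ?_
  have hui : Measurable (u i) := (hu i).measurable_of_compactSpace_pi
  let gain : C(C i, C(∀ j, C j, ℝ)) := ContinuousMap.curry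
    ⟨fun q => u i (update q.2 i q.1) - u i q.2, by fun_prop⟩
  exact forall_integral_le_iff_forall_sum_integral_mul_le (Φ := gain) (measurable_pi_apply i)
    ((hui.comp (measurable_update'.comp measurable_swap)).sub (hui.comp measurable_snd))
    (fun s => by simp [gain])

theorem stmt_7 (n : ℕ) (C : Fin n → Type*)
    [∀ i, TopologicalSpace (C i)] [∀ i, CompactSpace (C i)] [∀ i, T2Space (C i)]
    [∀ i, MeasurableSpace (C i)] [∀ i, BorelSpace (C i)]
    (u : Fin n → (∀ i, C i) → ℝ) (hu : ∀ i, Continuous (u i))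
    (π : Measure (∀ i, C i)) [IsProbabilityMeasure π] [π.Regular]
    (ε : ℝ) :
    (∀ i, ∀ ζ : C i → C i, Measurable ζ →
      ∫ s, (u i (Function.update s i (ζ (s i))) - u i s) ∂π ≤ ε) ↔
    (∀ i, ∀ k : ℕ, 0 < k → ∀ t : Fin k → C i, ∀ f : Fin k → C i → ℝ,
      (∀ j, Measurable (f j)) →
      (∀ j x, f j x ∈ Set.Icc (0 : ℝ) 1) →
      (∀ x, ∑ j, f j x ≤ 1) →
      ∑ j, ∫ s, f j (s i) * (u i (Function.update s i (t j)) - u i s) ∂π ≤ ε) :=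
  stmt_7_general n C u hu π ε
end

section
/- In a continuous game, a probability measure π is a correlated equilibrium if and only if for every player i, every t_i ∈ C_i, and every Borel measurable set B_i ⊆ C_i, ∫_{B_i × C_{−i}} [u_i(t_i, s_{−i}) − u_i(s)] dπ(s) ≤ 0. -/
/-!
Testing a deviation `ζ` against `π` only involves the gain `G (t, s) = u i (update s i t) - u i s`,
which is uniformly continuous in `t`. By compactness of `C i`, `ζ` is uniformly within `ε` of a
measurable deviation with finitely many values `t`, i.e. of a map that plays `t` on a measurable
set `B` of own strategies; such a map gains at most the sum of the tested integrals over the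
disjoint sets `{s | s i ∈ B}`, and letting `ε → 0` gives the equilibrium inequality for `ζ`.
Conversely, playing `t` on `B` and obeying the recommendation off `B` is itself a deviation.

The product σ-algebra on `∀ i, C i` need not be its Borel σ-algebra, so measurability of the
continuous utilities is not automatic: it comes from Stone–Weierstrass, which approximates them
uniformly by polynomials in continuous functions of single coordinates.
-/

open MeasureTheory Set Filter Function

lemma ContinuousMap.measurable_of_separatesPoints {X : Type*} [TopologicalSpace X]
    [CompactSpace X] [MeasurableSpace X] (A : Subalgebra ℝ C(X, ℝ)) (hA : A.SeparatesPoints)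
    (hmeas : ∀ g ∈ A, Measurable g) (f : C(X, ℝ)) : Measurable f := by
  have hf : f ∈ closure (A : Set C(X, ℝ)) := by
    rw [← Subalgebra.topologicalClosure_coe,
      ContinuousMap.subalgebra_topologicalClosure_eq_top_of_separatesPoints A hA]
    trivial
  obtain ⟨g, hgA, hg⟩ := mem_closure_iff_seq_limit.1 hf
  exact measurable_of_tendsto_metrizable' atTop (fun k => hmeas _ (hgA k))
    (tendsto_pi_nhds.2 fun x => ((continuous_eval_const x).tendsto f).comp hg)

lemma ContinuousMap.measurable_pi {ι : Type*} {X : ι → Type*} [∀ i, TopologicalSpace (X i)]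
    [∀ i, CompactSpace (X i)] [∀ i, T2Space (X i)] [∀ i, MeasurableSpace (X i)]
    [∀ i, OpensMeasurableSpace (X i)] (f : C((∀ i, X i), ℝ)) : Measurable f := by
  let A := Algebra.adjoin ℝ {g | ∃ (i : ι) (h : C(X i, ℝ)), g = h.comp (ContinuousMap.eval i)}
  refine ContinuousMap.measurable_of_separatesPoints A ?_ (fun g hg => ?_) f
  · intro x y hxy
    obtain ⟨i, hi⟩ := Function.ne_iff.mp hxy
    obtain ⟨h, hx, hy, -⟩ := exists_continuous_zero_one_of_isClosed
      (isClosed_singleton (x := x i)) (isClosed_singleton (x := y i))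
      (Set.disjoint_singleton.mpr hi)
    refine ⟨_, ⟨h.comp (ContinuousMap.eval i), Algebra.subset_adjoin ⟨i, h, rfl⟩, rfl⟩, ?_⟩
    simp [hx rfl, hy rfl]
  · induction hg using Algebra.adjoin_induction with
    | mem g hg =>
      obtain ⟨i, h, rfl⟩ := hg
      exact h.continuous.measurable.comp (measurable_pi_apply i)
    | algebraMap r => exact measurable_const
    | add p q _ _ hp hq => exact hp.add hq
    | mul p q _ _ hp hq => exact hp.mul hq

lemma exists_simpleFunc_dist_comp_lt {Z Y E : Type*} [MeasurableSpace Z] [TopologicalSpace Y]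
    [CompactSpace Y] [Nonempty Y] [MeasurableSpace Y] [OpensMeasurableSpace Y]
    [PseudoMetricSpace E] {g : Y → E} (hg : Continuous g) {ζ : Z → Y} (hζ : Measurable ζ)
    {ε : ℝ} (hε : 0 < ε) : ∃ ζ' : SimpleFunc Z Y, ∀ z, dist (g (ζ' z)) (g (ζ z)) < ε := by
  classical
  let U : Y → Set Y := fun t => g ⁻¹' Metric.ball (g t) ε
  have hU : ∀ t, IsOpen (U t) := fun t => Metric.isOpen_ball.preimage hg
  obtain ⟨T, hT⟩ := isCompact_univ.elim_finite_subcover U hU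
    (fun t _ => mem_iUnion.2 ⟨t, Metric.mem_ball_self hε⟩)
  suffices ∀ T' : Finset Y, ∃ ζ' : SimpleFunc Z Y,
      ∀ z, (∃ t ∈ T', ζ z ∈ U t) → dist (g (ζ' z)) (g (ζ z)) < ε by
    obtain ⟨ζ', hζ'⟩ := this T
    exact ⟨ζ', fun z => hζ' z (by simpa using hT (mem_univ (ζ z)))⟩
  intro T'
  induction T' using Finset.induction with
  | empty => exact ⟨SimpleFunc.const Z (Classical.arbitrary Y), by simp⟩
  | insert t T' _ ih =>
    obtain ⟨ζ', hζ'⟩ := ih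
    refine ⟨SimpleFunc.piecewise _ (hζ (hU t).measurableSet) (SimpleFunc.const Z t) ζ',
      fun z hz => ?_⟩
    by_cases hzt : ζ z ∈ U t
    · rw [SimpleFunc.coe_piecewise, piecewise_eq_of_mem _ _ _ (mem_preimage.2 hzt),
        SimpleFunc.const_apply, dist_comm]
      exact hzt
    · obtain ⟨t', ht', hzt'⟩ := hz
      rcases Finset.mem_insert.1 ht' with rfl | ht'
      · exact absurd hzt' hzt
      · simpa [hzt] using hζ' z ⟨t', ht', hzt'⟩

section Deviation

variable {X Y : Type*} [TopologicalSpace X] [CompactSpace X] [MeasurableSpace X]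
  [TopologicalSpace Y] [CompactSpace Y] [MeasurableSpace Y] {μ : Measure X}

lemma ContinuousMap.integrable_comp_prodMk [IsFiniteMeasure μ] (G : C(Y × X, ℝ))
    (hG : Measurable G) {f : X → Y} (hf : Measurable f) :
    Integrable (fun s => G (f s, s)) μ :=
  .of_bound (hG.comp (hf.prodMk measurable_id)).aestronglyMeasurable ‖G‖
    (.of_forall fun s => G.norm_coe_le_norm (f s, s))

lemma integral_simpleFunc_comp_le_zero [IsFiniteMeasure μ] {p : X → Y} (hp : Measurable p)
    (G : C(Y × X, ℝ)) (hG : Measurable G)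
    (h : ∀ t B, MeasurableSet B → ∫ s in p ⁻¹' B, G (t, s) ∂μ ≤ 0) (ζ : SimpleFunc Y Y) :
    ∫ s, G (ζ (p s), s) ∂μ ≤ 0 := by
  have hsum : (fun s => G (ζ (p s), s)) =
      fun s => ∑ t ∈ ζ.range, (p ⁻¹' (ζ ⁻¹' {t})).indicator (fun s => G (t, s)) s := by
    funext s
    rw [Finset.sum_eq_single_of_mem (ζ (p s)) (ζ.mem_range_self _)]
    · simp
    · intro t _ ht
      exact indicator_of_notMem (s := p ⁻¹' (ζ ⁻¹' {t})) (fun hs => ht (Eq.symm hs)) _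
  rw [hsum, integral_finsetSum _ fun t _ =>
    ((G.integrable_comp_prodMk hG measurable_const).indicator (hp (ζ.measurableSet_fiber t)))]
  refine Finset.sum_nonpos fun t _ => ?_
  rw [integral_indicator (hp (ζ.measurableSet_fiber t))]
  exact h t _ (ζ.measurableSet_fiber t)

lemma integral_comp_le_zero_of_forall_setIntegral_le_zero [IsFiniteMeasure μ]
    [OpensMeasurableSpace Y] {p : X → Y} (hp : Measurable p) (G : C(Y × X, ℝ))
    (hG : Measurable G) (h : ∀ t B, MeasurableSet B → ∫ s in p ⁻¹' B, G (t, s) ∂μ ≤ 0)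
    {ζ : Y → Y} (hζ : Measurable ζ) : ∫ s, G (ζ (p s), s) ∂μ ≤ 0 := by
  rcases isEmpty_or_nonempty X with _ | ⟨⟨x⟩⟩
  · simp [integral_of_isEmpty]
  have : Nonempty Y := ⟨p x⟩
  refine le_of_forall_pos_le_add fun ε hε => ?_
  set c := μ.real univ
  have hδ : 0 < ε / (c + 1) := by positivity
  obtain ⟨ζ', hζ'⟩ := exists_simpleFunc_dist_comp_lt G.curry.continuous hζ hδ
  have hclose : ∀ s, G (ζ (p s), s) ≤ G (ζ' (p s), s) + ε / (c + 1) := fun s => by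
    have := (ContinuousMap.dist_apply_le_dist s).trans_lt (hζ' (p s))
    rw [G.curry_apply, G.curry_apply, Real.dist_eq, abs_sub_lt_iff] at this
    linarith
  have hint' : Integrable (fun s => G (ζ' (p s), s)) μ :=
    G.integrable_comp_prodMk hG (ζ'.measurable.comp hp)
  calc ∫ s, G (ζ (p s), s) ∂μ
      ≤ ∫ s, (G (ζ' (p s), s) + ε / (c + 1)) ∂μ :=
        integral_mono (G.integrable_comp_prodMk hG (hζ.comp hp))
          (hint'.add (integrable_const _)) hclose
    _ = ∫ s, G (ζ' (p s), s) ∂μ + ε / (c + 1) * c := by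
        rw [integral_add hint' (integrable_const _), integral_const, smul_eq_mul, mul_comm]
    _ ≤ 0 + ε := by
        gcongr
        · exact integral_simpleFunc_comp_le_zero hp G hG h ζ'
        · rw [div_mul_eq_mul_div, div_le_iff₀ (by positivity)]
          nlinarith [measureReal_nonneg (μ := μ) (s := univ)]

end Deviation

lemma setIntegral_le_zero_of_forall_integral_comp_le_zero {X Y : Type*} [MeasurableSpace X]
    [MeasurableSpace Y] {μ : Measure X} {p : X → Y} (hp : Measurable p) {G : Y × X → ℝ}
    (hGp : ∀ s, G (p s, s) = 0) (h : ∀ ζ : Y → Y, Measurable ζ → ∫ s, G (ζ (p s), s) ∂μ ≤ 0)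
    (t : Y) {B : Set Y} (hB : MeasurableSet B) : ∫ s in p ⁻¹' B, G (t, s) ∂μ ≤ 0 := by
  classical
  have := h (B.piecewise (fun _ => t) id) (measurable_const.piecewise hB measurable_id)
  rw [← integral_indicator (hp hB)]
  refine (integral_congr_ae (.of_forall fun s => ?_)).trans_le this
  by_cases hs : p s ∈ B <;> simp [hs, hGp]

def deviationGain {ι : Type*} [DecidableEq ι] {X : ι → Type*} [∀ i, TopologicalSpace (X i)]
    (u : (∀ j, X j) → ℝ) (hu : Continuous u) (i : ι) : C(X i × (∀ j, X j), ℝ) :=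
  ⟨fun p => u (update p.2 i p.1) - u p.2, by fun_prop⟩

lemma measurable_deviationGain {ι : Type*} [DecidableEq ι] {X : ι → Type*}
    [∀ i, TopologicalSpace (X i)] [∀ i, CompactSpace (X i)] [∀ i, T2Space (X i)]
    [∀ i, MeasurableSpace (X i)] [∀ i, OpensMeasurableSpace (X i)] {u : (∀ j, X j) → ℝ}
    (hu : Continuous u) (i : ι) : Measurable (deviationGain u hu i) := by
  have hum : Measurable u := ContinuousMap.measurable_pi ⟨u, hu⟩
  exact (hum.comp (measurable_update'.comp measurable_swap)).sub (hum.comp measurable_snd)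

theorem stmt_10_general (n : ℕ) (C : Fin n → Type*)
    [∀ i, TopologicalSpace (C i)] [∀ i, CompactSpace (C i)] [∀ i, T2Space (C i)]
    [∀ i, MeasurableSpace (C i)] [∀ i, BorelSpace (C i)]
    (u : Fin n → (∀ i, C i) → ℝ) (hu : ∀ i, Continuous (u i))
    (π : Measure (∀ i, C i)) [IsProbabilityMeasure π] :
    (∀ i, ∀ ζ : C i → C i, Measurable ζ →
      ∫ s, (u i (Function.update s i (ζ (s i))) - u i s) ∂π ≤ 0) ↔
    (∀ i, ∀ tᵢ : C i, ∀ B : Set (C i), MeasurableSet B →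
      ∫ s in {s | s i ∈ B}, (u i (Function.update s i tᵢ) - u i s) ∂π ≤ 0) := by
  constructor
  · intro h i t B hB
    exact setIntegral_le_zero_of_forall_integral_comp_le_zero (measurable_pi_apply i)
      (G := deviationGain (u i) (hu i) i) (fun s => by simp [deviationGain]) (h i) t hB
  · intro h i ζ hζ
    exact integral_comp_le_zero_of_forall_setIntegral_le_zero (measurable_pi_apply i)
      (deviationGain (u i) (hu i) i) (measurable_deviationGain (hu i) i) (h i) hζ

theorem stmt_10 (n : ℕ) (C : Fin n → Type*)
    [∀ i, TopologicalSpace (C i)] [∀ i, CompactSpace (C i)] [∀ i, T2Space (C i)]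
    [∀ i, MeasurableSpace (C i)] [∀ i, BorelSpace (C i)]
    (u : Fin n → (∀ i, C i) → ℝ) (hu : ∀ i, Continuous (u i))
    (π : Measure (∀ i, C i)) [IsProbabilityMeasure π] [π.Regular] :
    (∀ i, ∀ ζ : C i → C i, Measurable ζ →
      ∫ s, (u i (Function.update s i (ζ (s i))) - u i s) ∂π ≤ 0) ↔
    (∀ i, ∀ tᵢ : C i, ∀ B : Set (C i), MeasurableSet B →
      ∫ s in {s | s i ∈ B}, (u i (Function.update s i tᵢ) - u i s) ∂π ≤ 0) :=
  stmt_10_general n C u hu π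
end
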